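/- Fix an integer d ≥ 2, an index 0 ≤ i ≤ d, a threshold u ∈ ℝ, and κ as below with κ'(1) < 1. Then, as L → ∞, N_i(L,u) converges to (2√π / Γ((d+1)/2)) · (η_1(1−κ'(1)))^{−d/2} · (∫_{ℝ^d} Π(λ)·𝟙_{O_i}(λ)·f_{(1+η_1(1−κ'(1)))/2}(λ) dλ) · (1 − Φ(u)). (Low-disorder regime of Theorem 3.3, stated via the Kac–Rice expression for critical points of index i above level u.) -/

import Mathlib

open MeasureTheory Filter Real

/-- `K_d := 2^{d/2} ∏_{j=1}^d Γ(j/2)`. -/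
noncomputable def Kd (d : ℕ) : ℝ :=
  2 ^ ((d : ℝ) / 2) * ∏ j ∈ Finset.Icc 1 d, Real.Gamma ((j : ℝ) / 2)

/-- `Π(λ) := ∏_{j=1}^d |λ_j|`. -/
noncomputable def PiAbs (d : ℕ) (lam : Fin d → ℝ) : ℝ := ∏ j, |lam j|

/-- `Δ(λ) := ∏_{1 ≤ h < k ≤ d} |λ_h − λ_k|`. -/
noncomputable def DeltaV (d : ℕ) (lam : Fin d → ℝ) : ℝ :=
  ∏ h : Fin d, ∏ k : Fin d, if h < k then |lam h - lam k| else 1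

/-- The density of the ordered eigenvalues of a GOI(c) matrix. -/
noncomputable def fGOI (d : ℕ) (c : ℝ) (lam : Fin d → ℝ) : ℝ :=
  (Kd d * Real.sqrt (1 + d * c))⁻¹ * DeltaV d lam *
    Real.exp (-(∑ j, lam j ^ 2) / 2 + c * (∑ j, lam j) ^ 2 / (2 * (1 + d * c))) *
    Set.indicator {x : Fin d → ℝ | Monotone x} (fun _ => 1) lam

/-- `O_i := {λ : λ_i < 0 < λ_{i+1}}` with conventions `λ_0 = −∞`, `λ_{d+1} = +∞`
(one-based indexing; coordinates here are zero-based). -/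
def Oi (d i : ℕ) : Set (Fin d → ℝ) :=
  {lam | (∀ j : Fin d, (j : ℕ) + 1 = i → lam j < 0) ∧ (∀ j : Fin d, (j : ℕ) = i → 0 < lam j)}

/-- `∫_{ℝ^d} Π(λ)·𝟙_{O_i}(λ)·f_c(λ) dλ`. -/
noncomputable def GOIint (d i : ℕ) (c : ℝ) : ℝ :=
  ∫ lam : Fin d → ℝ,
    PiAbs d lam * Set.indicator (Oi d i) (fun _ => 1) lam * fGOI d c lam

/-- `η_L := κ_L'(1)/κ_L''(1)` where `κ_L` is the `L`-fold iterate of `κ`. -/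
noncomputable def etaL (κ : ℝ → ℝ) (L : ℕ) : ℝ :=
  deriv (κ^[L]) 1 / deriv (deriv (κ^[L])) 1

/-- The Kac–Rice expression for the expected number of critical points of index `i`
of the depth-`L` limiting field on `S^d`. -/
noncomputable def Mcrit (d i : ℕ) (κ : ℝ → ℝ) (L : ℕ) : ℝ :=
  2 * Real.sqrt π / Real.Gamma (((d : ℝ) + 1) / 2) * etaL κ L ^ (-(d : ℝ) / 2) *
    GOIint d i ((1 + etaL κ L) / 2)

/-- `ξ_L := κ_L'(1)²/κ_L''(1)`. -/
noncomputable def xiL (κ : ℝ → ℝ) (L : ℕ) : ℝ :=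
  deriv (κ^[L]) 1 ^ 2 / deriv (deriv (κ^[L])) 1

/-- The standard Gaussian density. -/
noncomputable def stdPhi (x : ℝ) : ℝ := Real.exp (-x ^ 2 / 2) / Real.sqrt (2 * π)

/-- The standard Gaussian cumulative distribution function. -/
noncomputable def stdCDF (u : ℝ) : ℝ := ∫ x in Set.Iic u, stdPhi x

/-- `∫_u^∞ φ(x)·(∫_{ℝ^d} Π(λ_{ξ,x})·𝟙_{O_i}(λ_{ξ,x})·f_c(λ) dλ) dx`, where
`λ_{ξ,x}` has components `λ_j − ξ·x/√2`. -/
noncomputable def GOIintShift (d i : ℕ) (c ξ u : ℝ) : ℝ :=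
  ∫ x in Set.Ioi u, stdPhi x *
    ∫ lam : Fin d → ℝ,
      PiAbs d (fun j => lam j - ξ * x / Real.sqrt 2) *
        Set.indicator (Oi d i) (fun _ => 1) (fun j => lam j - ξ * x / Real.sqrt 2) *
        fGOI d c lam

/-- The Kac–Rice expression for the expected number of critical points of index `i`
above level `u` of the depth-`L` limiting field on `S^d`. -/
noncomputable def Ncrit (d i : ℕ) (κ : ℝ → ℝ) (u : ℝ) (L : ℕ) : ℝ :=
  2 * Real.sqrt π / Real.Gamma (((d : ℝ) + 1) / 2) * etaL κ L ^ (-(d : ℝ) / 2) *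
    GOIintShift d i ((1 + etaL κ L - xiL κ L) / 2) (xiL κ L) u

/-!
By the chain rule at the fixed point `1`, with `p = κ'(1)` and `q = κ''(1)`, one has
`κ_L'(1) = p^L` and `1/η_L = (q/p) ∑_{k<L} p^k`; for `p < 1` this gives
`η_L → p(1-p)/q` and `ξ_L = p^L η_L → 0`.

It then suffices that `(c, ξ) ↦ ∫_u^∞ φ(x) ∫ Π(λ_{ξ,x}) 𝟙_{O_i}(λ_{ξ,x}) f_c(λ) dλ dx` is
continuous at `(c, 0)` for `c > 0`, since at `ξ = 0` the outer integral factors as the claimed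
limit. Dominated convergence applies twice: for parameters near `(c, 0)` both integrands have
polynomial-times-Gaussian majorants, and the inner integrand is continuous in `(c, ξ)` unless `λ`
lies on the boundary of `O_i`, which is contained in the coordinate hyperplanes and hence null.
-/

open Topology

theorem continuousAt_indicator_const_of_notMem_frontier {X β : Type*} [TopologicalSpace X]
    [TopologicalSpace β] [Zero β] {s : Set X} {x : X} (hx : x ∉ frontier s) (b : β) :
    ContinuousAt (s.indicator fun _ => b) x := by
  by_cases hint : x ∈ interior s
  · refine ContinuousAt.congr (f := fun _ => b) continuousAt_const ?_
    filter_upwards [mem_interior_iff_mem_nhds.1 hint] with y hy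
    simp [hy]
  · have hcl : x ∉ closure s := fun h => hx ⟨h, hint⟩
    refine ContinuousAt.congr (f := fun _ => (0 : β)) continuousAt_const ?_
    filter_upwards [isClosed_closure.isOpen_compl.mem_nhds hcl] with y hy
    simp [notMem_of_notMem_closure hy]

theorem integrable_one_add_sq_pow_mul_exp_neg_mul_sq {b : ℝ} (hb : 0 < b) (m : ℕ) :
    Integrable fun x : ℝ => (1 + x ^ 2) ^ m * exp (-b * x ^ 2) := by
  have hmoment (n : ℕ) : Integrable fun x : ℝ => x ^ n * exp (-b * x ^ 2) := by
    simpa [Real.rpow_natCast] using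
      integrable_rpow_mul_exp_neg_mul_sq hb (s := n) (neg_one_lt_zero.trans_le n.cast_nonneg)
  have hexpand : (fun x : ℝ => (1 + x ^ 2) ^ m * exp (-b * x ^ 2)) = fun x =>
      ∑ k ∈ Finset.range (m + 1), (m.choose k : ℝ) * (x ^ (2 * (m - k)) * exp (-b * x ^ 2)) := by
    funext x
    rw [add_pow, Finset.sum_mul]
    refine Finset.sum_congr rfl fun k _ => ?_
    rw [pow_mul]
    ring
  rw [hexpand]
  exact integrable_finsetSum _ fun _ _ => (hmoment _).const_mul _

theorem abs_sub_le_one_add_sq_mul_one_add_sq (a b : ℝ) :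
    |a - b| ≤ (1 + a ^ 2) * (1 + b ^ 2) := by
  rw [abs_le]
  constructor <;> nlinarith [sq_nonneg (a + 1), sq_nonneg (a - 1), sq_nonneg (b + 1),
    sq_nonneg (b - 1), mul_nonneg (sq_nonneg a) (sq_nonneg b)]

section Iterates

variable {κ : ℝ → ℝ}

theorem contDiff_iterate (hκ : ContDiff ℝ 2 κ) (L : ℕ) : ContDiff ℝ 2 κ^[L] := by
  induction L with
  | zero => exact contDiff_id
  | succ L ih => rw [Function.iterate_succ']; exact hκ.comp ih

theorem deriv_iterate_of_isFixedPt (hκ : Differentiable ℝ κ) {x : ℝ} (hx : κ x = x) (L : ℕ) :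
    deriv κ^[L] x = deriv κ x ^ L :=
  (HasDerivAt.iterate x (hκ x).hasDerivAt hx L).deriv

theorem deriv_deriv_iterate_succ_of_isFixedPt (hκ : ContDiff ℝ 2 κ) {x : ℝ} (hx : κ x = x)
    (L : ℕ) :
    deriv (deriv κ^[L + 1]) x =
      deriv (deriv κ) x * deriv κ x ^ (2 * L) + deriv κ x * deriv (deriv κ^[L]) x := by
  have hκ₁ : Differentiable ℝ κ := hκ.differentiable two_ne_zero
  have hL : ContDiff ℝ 2 κ^[L] := contDiff_iterate hκ L
  have hchain : deriv κ^[L + 1] = deriv κ ∘ κ^[L] * deriv κ^[L] := by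
    funext y
    rw [Function.iterate_succ']
    exact deriv_comp y (hκ₁ _) (hL.differentiable two_ne_zero y)
  have hprod := (((hκ.differentiable_deriv_two _).hasDerivAt).comp x
    ((hL.differentiable two_ne_zero x).hasDerivAt)).mul
    (hL.differentiable_deriv_two x).hasDerivAt
  rw [hchain, hprod.deriv, Function.comp_apply, Function.iterate_fixed hx,
    deriv_iterate_of_isFixedPt hκ₁ hx]
  ring

theorem inv_etaL_eq (hκ : ContDiff ℝ 2 κ) (hfix : κ 1 = 1) (hp : deriv κ 1 ≠ 0) (L : ℕ) :
    (etaL κ L)⁻¹ = deriv (deriv κ) 1 / deriv κ 1 * ∑ k ∈ Finset.range L, deriv κ 1 ^ k := by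
  have hκ₁ : Differentiable ℝ κ := hκ.differentiable two_ne_zero
  induction L with
  | zero => simp [etaL]
  | succ L ih =>
    rw [etaL, inv_div, deriv_iterate_of_isFixedPt hκ₁ hfix] at ih ⊢
    rw [deriv_deriv_iterate_succ_of_isFixedPt hκ hfix, Finset.sum_range_succ, mul_add,
      ← ih]
    field_simp
    ring

theorem tendsto_etaL (hκ : ContDiff ℝ 2 κ) (hfix : κ 1 = 1) (hp₀ : 0 < deriv κ 1)
    (hp₁ : deriv κ 1 < 1) (hq : 0 < deriv (deriv κ) 1) :
    Tendsto (etaL κ) atTop (𝓝 (deriv κ 1 / deriv (deriv κ) 1 * (1 - deriv κ 1))) := by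
  have hgeom := (hasSum_geometric_of_lt_one hp₀.le hp₁).tendsto_sum_nat
  have hinv := (tendsto_const_nhds (x := deriv (deriv κ) 1 / deriv κ 1)).mul hgeom
  simp_rw [← inv_etaL_eq hκ hfix hp₀.ne'] at hinv
  have hlim := hinv.inv₀ (by have := sub_pos.2 hp₁; positivity)
  simp only [inv_inv] at hlim
  convert hlim using 2
  field_simp

theorem tendsto_xiL (hκ : ContDiff ℝ 2 κ) (hfix : κ 1 = 1) (hp₀ : 0 < deriv κ 1)
    (hp₁ : deriv κ 1 < 1) (hq : 0 < deriv (deriv κ) 1) :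
    Tendsto (xiL κ) atTop (𝓝 0) := by
  have hxi : xiL κ = fun L => deriv κ 1 ^ L * etaL κ L := by
    funext L
    rw [xiL, etaL, deriv_iterate_of_isFixedPt (hκ.differentiable two_ne_zero) hfix, sq,
      mul_div_assoc]
  simpa [hxi] using (tendsto_pow_atTop_nhds_zero_of_lt_one hp₀.le hp₁).mul
    (tendsto_etaL hκ hfix hp₀ hp₁ hq)

end Iterates

theorem Kd_pos (d : ℕ) : 0 < Kd d :=
  mul_pos (rpow_pos_of_pos two_pos _) <| Finset.prod_pos fun _ hj =>
    Real.Gamma_pos_of_pos <| div_pos (Nat.cast_pos.2 (Finset.mem_Icc.1 hj).1) two_pos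

theorem PiAbs_sub_const_le (d : ℕ) (lam : Fin d → ℝ) (s : ℝ) :
    PiAbs d (fun j => lam j - s) ≤ (1 + s ^ 2) ^ d * ∏ j, (1 + lam j ^ 2) := by
  calc PiAbs d (fun j => lam j - s) ≤ ∏ j, (1 + lam j ^ 2) * (1 + s ^ 2) :=
        Finset.prod_le_prod (fun _ _ => abs_nonneg _)
          fun _ _ => abs_sub_le_one_add_sq_mul_one_add_sq _ _
    _ = (1 + s ^ 2) ^ d * ∏ j, (1 + lam j ^ 2) := by
        rw [Finset.prod_mul_distrib, Finset.prod_const, Finset.card_univ, Fintype.card_fin,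
          mul_comm]

theorem DeltaV_nonneg (d : ℕ) (lam : Fin d → ℝ) : 0 ≤ DeltaV d lam :=
  Finset.prod_nonneg fun _ _ => Finset.prod_nonneg fun _ _ => by
    split_ifs <;> positivity

theorem DeltaV_le (d : ℕ) (lam : Fin d → ℝ) :
    DeltaV d lam ≤ (∏ j, (1 + lam j ^ 2)) ^ (2 * d) := by
  have hfactor (h k : Fin d) :
      (if h < k then |lam h - lam k| else 1) ≤ (1 + lam h ^ 2) * (1 + lam k ^ 2) := by
    split_ifs
    · exact abs_sub_le_one_add_sq_mul_one_add_sq _ _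
    · nlinarith [sq_nonneg (lam h), sq_nonneg (lam k),
        mul_nonneg (sq_nonneg (lam h)) (sq_nonneg (lam k))]
  calc DeltaV d lam ≤ ∏ h : Fin d, ∏ k : Fin d, (1 + lam h ^ 2) * (1 + lam k ^ 2) :=
        Finset.prod_le_prod (fun _ _ => Finset.prod_nonneg fun _ _ => by split_ifs <;> positivity)
          fun h _ => Finset.prod_le_prod (fun _ _ => by split_ifs <;> positivity)
            fun k _ => hfactor h k
    _ = (∏ j, (1 + lam j ^ 2)) ^ (2 * d) := by
        simp only [Finset.prod_mul_distrib, Finset.prod_const, Finset.card_univ,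
          Fintype.card_fin, Finset.prod_pow]
        ring

theorem fGOI_exponent_le {d : ℕ} {c C : ℝ} (hc : 0 ≤ c) (hcC : c ≤ C) (lam : Fin d → ℝ) :
    -(∑ j, lam j ^ 2) / 2 + c * (∑ j, lam j) ^ 2 / (2 * (1 + d * c))
      ≤ -(2 * (1 + d * C))⁻¹ * ∑ j, lam j ^ 2 := by
  have hcauchy : (∑ j, lam j) ^ 2 ≤ d * ∑ j, lam j ^ 2 := by
    simpa using sq_sum_le_card_mul_sum_sq (s := Finset.univ) (f := lam)
  have hdc : 0 ≤ (d : ℝ) * c := by positivity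
  have hdC : (d : ℝ) * c ≤ d * C := by gcongr
  have hsum : 0 ≤ ∑ j, lam j ^ 2 := by positivity
  calc -(∑ j, lam j ^ 2) / 2 + c * (∑ j, lam j) ^ 2 / (2 * (1 + d * c))
      ≤ -(∑ j, lam j ^ 2) / 2 + c * (d * ∑ j, lam j ^ 2) / (2 * (1 + d * c)) := by gcongr
    _ = -(2 * (1 + d * c))⁻¹ * ∑ j, lam j ^ 2 := by field_simp; ring
    _ ≤ -(2 * (1 + d * C))⁻¹ * ∑ j, lam j ^ 2 := by gcongr

theorem fGOI_nonneg (d : ℕ) (c : ℝ) (lam : Fin d → ℝ) : 0 ≤ fGOI d c lam := by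
  have := Kd_pos d
  have := DeltaV_nonneg d lam
  have : 0 ≤ Set.indicator {x : Fin d → ℝ | Monotone x} (fun _ => (1 : ℝ)) lam :=
    Set.indicator_nonneg (fun _ _ => zero_le_one) lam
  unfold fGOI
  positivity

theorem fGOI_le {d : ℕ} {c C : ℝ} (hc : 0 ≤ c) (hcC : c ≤ C) (lam : Fin d → ℝ) :
    fGOI d c lam ≤
      (Kd d)⁻¹ * (∏ j, (1 + lam j ^ 2)) ^ (2 * d) *
        exp (-(2 * (1 + d * C))⁻¹ * ∑ j, lam j ^ 2) := by
  have hK := Kd_pos d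
  have hdc : 0 ≤ (d : ℝ) * c := by positivity
  have hsqrt : 1 ≤ √(1 + d * c) := Real.one_le_sqrt.2 (by linarith)
  have hind : Set.indicator {x : Fin d → ℝ | Monotone x} (fun _ => (1 : ℝ)) lam ≤ 1 :=
    Set.indicator_le_self' (fun _ _ => zero_le_one) lam
  unfold fGOI
  calc (Kd d * √(1 + d * c))⁻¹ * DeltaV d lam *
        exp (-(∑ j, lam j ^ 2) / 2 + c * (∑ j, lam j) ^ 2 / (2 * (1 + d * c))) *
        Set.indicator {x : Fin d → ℝ | Monotone x} (fun _ => 1) lam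
      ≤ (Kd d)⁻¹ * (∏ j, (1 + lam j ^ 2)) ^ (2 * d) *
          exp (-(2 * (1 + d * C))⁻¹ * ∑ j, lam j ^ 2) * 1 := by
        have := DeltaV_nonneg d lam
        have : 0 ≤ Set.indicator {x : Fin d → ℝ | Monotone x} (fun _ => (1 : ℝ)) lam :=
          Set.indicator_nonneg (fun _ _ => zero_le_one) lam
        gcongr
        · exact le_mul_of_one_le_right hK.le hsqrt
        · exact DeltaV_le d lam
        · exact fGOI_exponent_le hc hcC lam
    _ = _ := mul_one _

/-- Shared by `GOIint` (`s = 0`) and `GOIintShift` (`s = ξ x / √2`). -/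
noncomputable def kacRiceIntegrand (d i : ℕ) (c s : ℝ) (lam : Fin d → ℝ) : ℝ :=
  PiAbs d (fun j => lam j - s) * Set.indicator (Oi d i) (fun _ => 1) (fun j => lam j - s) *
    fGOI d c lam

noncomputable def gaussianMajorant (d : ℕ) (C : ℝ) (lam : Fin d → ℝ) : ℝ :=
  (Kd d)⁻¹ * ∏ j, ((1 + lam j ^ 2) ^ (2 * d + 1) * exp (-(2 * (1 + d * C))⁻¹ * lam j ^ 2))

theorem gaussianMajorant_nonneg (d : ℕ) (C : ℝ) (lam : Fin d → ℝ) :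
    0 ≤ gaussianMajorant d C lam :=
  mul_nonneg (inv_nonneg.2 (Kd_pos d).le) (Finset.prod_nonneg fun _ _ => by positivity)

theorem kacRiceIntegrand_nonneg (d i : ℕ) (c s : ℝ) (lam : Fin d → ℝ) :
    0 ≤ kacRiceIntegrand d i c s lam :=
  mul_nonneg (mul_nonneg (Finset.prod_nonneg fun _ _ => abs_nonneg _)
    (Set.indicator_nonneg (fun _ _ => zero_le_one) _)) (fGOI_nonneg d c lam)

theorem kacRiceIntegrand_le {d : ℕ} (i : ℕ) {c C : ℝ} (hc : 0 ≤ c) (hcC : c ≤ C) (s : ℝ)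
    (lam : Fin d → ℝ) :
    kacRiceIntegrand d i c s lam ≤ (1 + s ^ 2) ^ d * gaussianMajorant d C lam := by
  have hind : Set.indicator (Oi d i) (fun _ => (1 : ℝ)) (fun j => lam j - s) ≤ 1 :=
    Set.indicator_le_self' (fun _ _ => zero_le_one) _
  calc kacRiceIntegrand d i c s lam
      ≤ ((1 + s ^ 2) ^ d * ∏ j, (1 + lam j ^ 2)) * 1 *
          ((Kd d)⁻¹ * (∏ j, (1 + lam j ^ 2)) ^ (2 * d) *
            exp (-(2 * (1 + d * C))⁻¹ * ∑ j, lam j ^ 2)) := by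
        have := fGOI_nonneg d c lam
        have : 0 ≤ Set.indicator (Oi d i) (fun _ => (1 : ℝ)) (fun j => lam j - s) :=
          Set.indicator_nonneg (fun _ _ => zero_le_one) _
        have : 0 ≤ PiAbs d (fun j => lam j - s) := Finset.prod_nonneg fun _ _ => abs_nonneg _
        unfold kacRiceIntegrand
        gcongr
        · exact PiAbs_sub_const_le d lam s
        · exact fGOI_le hc hcC lam
    _ = (1 + s ^ 2) ^ d * gaussianMajorant d C lam := by
        rw [gaussianMajorant, Finset.prod_mul_distrib, Finset.prod_pow, ← Real.exp_sum,
          ← Finset.mul_sum]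
        ring

theorem integrable_gaussianMajorant (d : ℕ) {C : ℝ} (hC : 0 ≤ C) :
    Integrable (gaussianMajorant d C) := by
  have hb : 0 < (2 * (1 + d * C))⁻¹ := by positivity
  exact (Integrable.fin_nat_prod fun _ =>
    integrable_one_add_sq_pow_mul_exp_neg_mul_sq hb _).const_mul _

theorem isOpen_Oi (d i : ℕ) : IsOpen (Oi d i) := by
  simp only [Oi, Set.ofPred_and, Set.ofPred_forall]
  exact (isOpen_iInter_of_finite fun j => isOpen_iInter_of_finite fun _ =>
      isOpen_lt (continuous_apply j) continuous_const).inter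
    (isOpen_iInter_of_finite fun j => isOpen_iInter_of_finite fun _ =>
      isOpen_lt continuous_const (continuous_apply j))

theorem frontier_Oi_subset (d i : ℕ) : frontier (Oi d i) ⊆ {lam | ∃ j, lam j = 0} := by
  intro lam hlam
  simp only [Set.mem_ofPred_eq]
  by_contra! hne
  have hclosed : IsClosed {lam : Fin d → ℝ |
      (∀ j : Fin d, (j : ℕ) + 1 = i → lam j ≤ 0) ∧ (∀ j : Fin d, (j : ℕ) = i → 0 ≤ lam j)} := by
    simp only [Set.ofPred_and, Set.ofPred_forall]
    exact (isClosed_iInter fun j => isClosed_iInter fun _ =>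
        isClosed_le (continuous_apply j) continuous_const).inter
      (isClosed_iInter fun j => isClosed_iInter fun _ =>
        isClosed_le continuous_const (continuous_apply j))
  have hcl := hclosed.closure_subset_iff.2
    (fun x hx => ⟨fun j hj => (hx.1 j hj).le, fun j hj => (hx.2 j hj).le⟩) hlam.1
  refine hlam.2 ?_
  rw [(isOpen_Oi d i).interior_eq]
  exact ⟨fun j hj => (hcl.1 j hj).lt_of_ne (hne j),
    fun j hj => (hcl.2 j hj).lt_of_ne' (hne j)⟩

theorem ae_notMem_frontier_Oi (d i : ℕ) : ∀ᵐ lam : Fin d → ℝ, lam ∉ frontier (Oi d i) := by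
  have hne : ∀ᵐ lam : Fin d → ℝ, ∀ j, lam j ≠ 0 := ae_all_iff.2 fun j => by
    simpa [volume_pi] using Measure.ae_eval_ne (fun _ : Fin d => (volume : Measure ℝ)) j 0
  filter_upwards [hne] with lam hlam hfr
  obtain ⟨j, hj⟩ := frontier_Oi_subset d i hfr
  exact hlam j hj

theorem continuous_PiAbs (d : ℕ) : Continuous (PiAbs d) :=
  continuous_finsetProd _ fun j _ => (continuous_apply j).abs

theorem continuous_DeltaV (d : ℕ) : Continuous (DeltaV d) :=
  continuous_finsetProd _ fun _ _ => continuous_finsetProd _ fun _ _ => by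
    split_ifs <;> fun_prop

theorem measurable_fGOI (d : ℕ) (c : ℝ) : Measurable (fGOI d c) := by
  unfold fGOI
  exact ((measurable_const.mul (continuous_DeltaV d).measurable).mul (by fun_prop)).mul
    (measurable_const.indicator isClosed_monotone.measurableSet)

theorem continuousAt_fGOI (d : ℕ) {c : ℝ} (hc : 0 < 1 + d * c) (lam : Fin d → ℝ) :
    ContinuousAt (fun c => fGOI d c lam) c := by
  have hne₁ : Kd d * √(1 + d * c) ≠ 0 := (mul_pos (Kd_pos d) (Real.sqrt_pos.2 hc)).ne'
  have hne₂ : 2 * (1 + d * c) ≠ 0 := by positivity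
  unfold fGOI
  fun_prop (disch := assumption)

theorem measurable_kacRiceIntegrand (d i : ℕ) (c : ℝ) :
    Measurable fun p : ℝ × (Fin d → ℝ) => kacRiceIntegrand d i c p.1 p.2 := by
  have hshift : Measurable fun p : ℝ × (Fin d → ℝ) => fun j => p.2 j - p.1 := by fun_prop
  exact (((continuous_PiAbs d).measurable.comp hshift).mul
    ((measurable_const.indicator (isOpen_Oi d i).measurableSet).comp hshift)).mul
    ((measurable_fGOI d c).comp measurable_snd)

theorem continuousAt_kacRiceIntegrand {d : ℕ} (i : ℕ) {c : ℝ} (hc : 0 < 1 + d * c)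
    {lam : Fin d → ℝ} (hlam : lam ∉ frontier (Oi d i)) :
    ContinuousAt (fun p : ℝ × ℝ => kacRiceIntegrand d i p.1 p.2 lam) (c, 0) := by
  have hshift : ContinuousAt (fun p : ℝ × ℝ => fun j => lam j - p.2) (c, 0) := by fun_prop
  have hind := (continuousAt_indicator_const_of_notMem_frontier hlam (1 : ℝ)).comp_of_eq
    hshift (by simp)
  exact (((continuous_PiAbs d).continuousAt.comp hshift).mul hind).mul
    (ContinuousAt.comp (g := fun c => fGOI d c lam) (continuousAt_fGOI d hc lam)
      continuousAt_fst)

theorem continuousAt_integral_kacRiceIntegrand {d : ℕ} (i : ℕ) {c : ℝ} (hc : 0 < c) :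
    ContinuousAt (fun p : ℝ × ℝ => ∫ lam, kacRiceIntegrand d i p.1 p.2 lam) (c, 0) := by
  refine continuousAt_of_dominated (bound := fun lam => 2 ^ d * gaussianMajorant d (c + 1) lam)
    (Eventually.of_forall fun p => ((measurable_kacRiceIntegrand d i p.1).comp
      measurable_prodMk_left).aestronglyMeasurable) ?_
    ((integrable_gaussianMajorant d (by positivity)).const_mul _) ?_
  · filter_upwards [prod_mem_nhds (Icc_mem_nhds hc (lt_add_one c))
      (Icc_mem_nhds neg_one_lt_zero one_pos)] with p ⟨hp₁, hp₂⟩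
    refine Eventually.of_forall fun lam => ?_
    rw [Real.norm_of_nonneg (kacRiceIntegrand_nonneg d i _ _ lam)]
    refine (kacRiceIntegrand_le i hp₁.1 hp₁.2 p.2 lam).trans ?_
    have : p.2 ^ 2 ≤ 1 := by nlinarith [hp₂.1, hp₂.2]
    have := gaussianMajorant_nonneg d (c + 1) lam
    gcongr
    linarith
  · filter_upwards [ae_notMem_frontier_Oi d i] with lam hlam
    exact continuousAt_kacRiceIntegrand i (by positivity) hlam

theorem integral_kacRiceIntegrand_le {d : ℕ} (i : ℕ) {c C : ℝ} (hc : 0 ≤ c) (hcC : c ≤ C)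
    (s : ℝ) :
    ∫ lam, kacRiceIntegrand d i c s lam ≤ (1 + s ^ 2) ^ d * ∫ lam, gaussianMajorant d C lam := by
  rw [← integral_const_mul]
  exact integral_mono_of_nonneg (Eventually.of_forall (kacRiceIntegrand_nonneg d i c s))
    ((integrable_gaussianMajorant d (hc.trans hcC)).const_mul _)
    (Eventually.of_forall (kacRiceIntegrand_le i hc hcC s))

theorem stdPhi_eq_gaussianPDFReal : stdPhi = ProbabilityTheory.gaussianPDFReal 0 1 := by
  funext x
  simp [stdPhi, ProbabilityTheory.gaussianPDFReal, div_eq_inv_mul, mul_comm]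

theorem integral_stdPhi_Ioi (u : ℝ) : ∫ x in Set.Ioi u, stdPhi x = 1 - stdCDF u := by
  have hint : Integrable stdPhi := by
    rw [stdPhi_eq_gaussianPDFReal]; exact ProbabilityTheory.integrable_gaussianPDFReal 0 1
  have htotal : ∫ x, stdPhi x = 1 := by
    rw [stdPhi_eq_gaussianPDFReal]
    exact ProbabilityTheory.integral_gaussianPDFReal_eq_one 0 one_ne_zero
  have hsplit :=
    intervalIntegral.integral_Iic_add_Ioi (b := u) hint.integrableOn hint.integrableOn
  rw [htotal] at hsplit
  rw [stdCDF]
  linarith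

theorem GOIintShift_zero (d i : ℕ) (c u : ℝ) :
    GOIintShift d i c 0 u = GOIint d i c * (1 - stdCDF u) := by
  simp only [GOIintShift, zero_mul, zero_div, sub_zero]
  rw [integral_mul_const, integral_stdPhi_Ioi, mul_comm, GOIint]

theorem integrable_stdPhi_mul_one_add_sq_pow (m : ℕ) :
    Integrable fun x => stdPhi x * (1 + x ^ 2) ^ m := by
  refine ((integrable_one_add_sq_pow_mul_exp_neg_mul_sq one_half_pos m).const_mul
    (√(2 * π))⁻¹).congr (Eventually.of_forall fun x => ?_)
  simp only [stdPhi, neg_mul, div_eq_mul_inv]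
  ring_nf

theorem stronglyMeasurable_integral_kacRiceIntegrand_scaled (d i : ℕ) (c ξ : ℝ) :
    StronglyMeasurable fun x : ℝ => ∫ lam, kacRiceIntegrand d i c (ξ * x / √2) lam := by
  have hscale : Measurable fun q : ℝ × (Fin d → ℝ) => (ξ * q.1 / √2, q.2) := by fun_prop
  exact ((measurable_kacRiceIntegrand d i c).comp hscale).stronglyMeasurable.integral_prod_right'

theorem continuousAt_GOIintShift {d : ℕ} (i : ℕ) {c : ℝ} (hc : 0 < c) (u : ℝ) :
    ContinuousAt (fun p : ℝ × ℝ => GOIintShift d i p.1 p.2 u) (c, 0) := by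
  show ContinuousAt (fun p : ℝ × ℝ =>
    ∫ x in Set.Ioi u, stdPhi x * ∫ lam, kacRiceIntegrand d i p.1 (p.2 * x / √2) lam) (c, 0)
  set M := ∫ lam, gaussianMajorant d (c + 1) lam
  have hM : 0 ≤ M := integral_nonneg (gaussianMajorant_nonneg d (c + 1))
  have hφ : Continuous stdPhi := by unfold stdPhi; fun_prop
  refine continuousAt_of_dominated (Eventually.of_forall fun p =>
      (hφ.measurable.stronglyMeasurable.mul
        (stronglyMeasurable_integral_kacRiceIntegrand_scaled d i p.1 p.2)).aestronglyMeasurable) ?_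
    ((integrable_stdPhi_mul_one_add_sq_pow d).mul_const M).integrableOn ?_
  · filter_upwards [prod_mem_nhds (Icc_mem_nhds hc (lt_add_one c))
      (Icc_mem_nhds neg_one_lt_zero one_pos)] with p ⟨hp₁, hp₂⟩
    refine Eventually.of_forall fun x => ?_
    have hφx : 0 ≤ stdPhi x := by unfold stdPhi; positivity
    have hsq : (p.2 * x / √2) ^ 2 ≤ x ^ 2 := by
      have hp : p.2 ^ 2 ≤ 1 := by nlinarith [hp₂.1, hp₂.2]
      rw [div_pow, Real.sq_sqrt zero_le_two, mul_pow]
      nlinarith [mul_le_mul_of_nonneg_right hp (sq_nonneg x), sq_nonneg x]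
    rw [Real.norm_of_nonneg
      (mul_nonneg hφx (integral_nonneg (kacRiceIntegrand_nonneg d i _ _))), mul_assoc]
    gcongr
    exact (integral_kacRiceIntegrand_le i hp₁.1 hp₁.2 _).trans (by gcongr)
  · refine Eventually.of_forall fun x => continuousAt_const.mul ?_
    have hscale : ContinuousAt (fun p : ℝ × ℝ => (p.1, p.2 * x / √2)) (c, 0) := by fun_prop
    have hpt : ((c, 0 * x / √2) : ℝ × ℝ) = (c, 0) := by simp
    have hinner := (continuousAt_integral_kacRiceIntegrand (d := d) i hc).comp_of_eq hscale hpt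
    exact hinner

theorem statement3_general (d i : ℕ) (u : ℝ) (κ : ℝ → ℝ)
    (hsmooth : ContDiff ℝ 2 κ) (hfix : κ 1 = 1)
    (hpos1 : 0 < deriv κ 1) (hpos2 : 0 < deriv (deriv κ) 1)
    (hlow : deriv κ 1 < 1) :
    Tendsto (fun L : ℕ => Ncrit d i κ u L) atTop
      (nhds (2 * Real.sqrt π / Real.Gamma (((d : ℝ) + 1) / 2) *
        (deriv κ 1 / deriv (deriv κ) 1 * (1 - deriv κ 1)) ^ (-(d : ℝ) / 2) *
        GOIint d i ((1 + deriv κ 1 / deriv (deriv κ) 1 * (1 - deriv κ 1)) / 2) *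
        (1 - stdCDF u))) := by
  set η := deriv κ 1 / deriv (deriv κ) 1 * (1 - deriv κ 1)
  have hη_pos : 0 < η := mul_pos (div_pos hpos1 hpos2) (sub_pos.2 hlow)
  have hη := tendsto_etaL hsmooth hfix hpos1 hlow hpos2
  have hξ := tendsto_xiL hsmooth hfix hpos1 hlow hpos2
  have hparams :=
    ((((tendsto_const_nhds (x := (1 : ℝ))).add hη).sub hξ).div_const 2).prodMk_nhds hξ
  rw [sub_zero] at hparams
  have hshift :=
    (continuousAt_GOIintShift (d := d) i (by positivity : 0 < (1 + η) / 2) u).tendsto.comp hparams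
  rw [GOIintShift_zero] at hshift
  have hpow := hη.rpow_const (p := -(d : ℝ) / 2) (Or.inl hη_pos.ne')
  have hlim := (hpow.const_mul (2 * √π / Gamma ((d + 1) / 2))).mul hshift
  rw [← mul_assoc] at hlim
  exact hlim

/-- Low-disorder regime of Theorem 3.3: if `κ'(1) < 1` then `N_i(L,u)` converges to
`(2√π/Γ((d+1)/2))·(η_1(1−κ'(1)))^{−d/2}·(∫ Π·𝟙_{O_i}·f_{(1+η_1(1−κ'(1)))/2})·(1−Φ(u))`. -/
theorem statement3 (d i : ℕ) (hd : 2 ≤ d) (hi : i ≤ d) (u : ℝ) (κ : ℝ → ℝ)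
    (hsmooth : ContDiff ℝ 2 κ) (hfix : κ 1 = 1)
    (hpos1 : 0 < deriv κ 1) (hpos2 : 0 < deriv (deriv κ) 1)
    (hjensen : deriv κ 1 * (deriv κ 1 - 1) ≤ deriv (deriv κ) 1)
    (hlow : deriv κ 1 < 1) :
    Tendsto (fun L : ℕ => Ncrit d i κ u L) atTop
      (nhds (2 * Real.sqrt π / Real.Gamma (((d : ℝ) + 1) / 2) *
        (deriv κ 1 / deriv (deriv κ) 1 * (1 - deriv κ 1)) ^ (-(d : ℝ) / 2) *
        GOIint d i ((1 + deriv κ 1 / deriv (deriv κ) 1 * (1 - deriv κ 1)) / 2) *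
        (1 - stdCDF u))) :=
  statement3_general d i u κ hsmooth hfix hpos1 hpos2 hlow
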